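/- arXiv:1711.04104 — 6 statements merged into one kernel-verified Lean document; each statement's English description precedes it below -/
import Mathlib

section
/- If there exists a nonzero matrix X in F^{r×s} with AX = XB, then the characteristic polynomials of A and B have a nontrivial common factor (i.e., gcd(c_A(t), c_B(t)) ≠ 1). -/
/-!
If `A * X = X * B`, then `p(A) * X = X * p(B)` for every polynomial `p`; with `p = c_A` this gives
`X * c_A(B) = 0`. Were `c_A` and `c_B` coprime, `c_A(B)` would be invertible because `c_B(B) = 0`,
forcing `X = 0`.
-/

open Matrix Polynomial

theorem Polynomial.isUnit_aeval_of_isCoprime {R S : Type*} [CommRing R] [Ring S] [Algebra R S]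
    {p q : R[X]} (hpq : IsCoprime p q) {x : S} (hq : aeval x q = 0) : IsUnit (aeval x p) := by
  obtain ⟨a, b, hab⟩ := hpq
  have hinv : aeval x a * aeval x p = 1 := by
    simpa [hq] using congrArg (aeval x) hab
  refine ⟨⟨aeval x p, aeval x a, ?_, hinv⟩, rfl⟩
  rwa [← map_mul, mul_comm, map_mul]

theorem Matrix.aeval_mul_eq_mul_aeval_of_mul_eq_mul {R m n : Type*} [CommRing R]
    [Fintype m] [Fintype n] [DecidableEq m] [DecidableEq n]
    {A : Matrix m m R} {B : Matrix n n R} {X : Matrix m n R} (hAB : A * X = X * B) (p : R[X]) :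
    aeval A p * X = X * aeval B p := by
  induction p using Polynomial.induction_on' with
  | add p q hp hq => rw [map_add, map_add, Matrix.add_mul, Matrix.mul_add, hp, hq]
  | monomial k a =>
    have hpow : A ^ k * X = X * B ^ k := by
      induction k with
      | zero => simp
      | succ k ih => rw [pow_succ, pow_succ, Matrix.mul_assoc, hAB, ← Matrix.mul_assoc, ih,
          Matrix.mul_assoc]
    simp only [aeval_monomial, ← Algebra.smul_def, Matrix.smul_mul, Matrix.mul_smul, hpow]

theorem stmt0 {F : Type*} [Field F] {r s : ℕ}
    (A : Matrix (Fin r) (Fin r) F) (B : Matrix (Fin s) (Fin s) F)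
    (h : ∃ X : Matrix (Fin r) (Fin s) F, X ≠ 0 ∧ A * X = X * B) :
    ¬ IsCoprime A.charpoly B.charpoly := by
  obtain ⟨X, hX, hAB⟩ := h
  intro hcop
  have hunit : IsUnit (aeval B A.charpoly) := isUnit_aeval_of_isCoprime hcop B.aeval_self_charpoly
  have hzero : X * aeval B A.charpoly = 0 := by
    rw [← aeval_mul_eq_mul_aeval_of_mul_eq_mul hAB, aeval_self_charpoly, Matrix.zero_mul]
  exact hX <| mul_left_injective_of_inv _ _ hunit.mul_val_inv <| by
    simpa only [Matrix.zero_mul] using hzero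
end

section
/- If K is a field extension of F, A ∈ F^{r×r}, and B ∈ F^{s×s}, then the dimension over F of {X ∈ F^{r×s} : AX = XB} equals the dimension over K of {X ∈ K^{r×s} : AX = XB}. -/
/-!
`C(A, B)` is the kernel of the Sylvester operator `X ↦ A X - X B`, whose matrix has entries in `F`.
Over `K` one gets the base change of that operator, and since `K` is flat over `F`, the kernel of
the base change is the base change of the kernel, which has the same dimension.
-/

open Matrix

/-- The intertwining code `C(A,B) = {X | A X = X B}` as a subspace of matrices. -/
def intertwiner (F : Type*) [Field F] {m n : Type*} [Fintype m] [Fintype n]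
    (A : Matrix m m F) (B : Matrix n n F) : Submodule F (Matrix m n F) where
  carrier := {X | A * X = X * B}
  add_mem' := by
    intro X Y hX hY
    simp only [Set.mem_setOf_eq] at *
    rw [Matrix.mul_add, Matrix.add_mul, hX, hY]
  zero_mem' := by simp [Set.mem_setOf_eq]
  smul_mem' := by
    intro c X hX
    simp only [Set.mem_setOf_eq] at *
    rw [Matrix.mul_smul, Matrix.smul_mul, hX]

open TensorProduct

theorem IsBaseChange.finrank_ker_eq {F K M M' : Type*} [Field F] [Field K] [Algebra F K]
    [AddCommGroup M] [Module F M] [AddCommGroup M'] [Module F M'] [Module K M']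
    [IsScalarTower F K M'] {f : M →ₗ[F] M'} (hf : IsBaseChange K f)
    (L : M →ₗ[F] M) (L' : M' →ₗ[K] M') (hL : ∀ x, L' (f x) = f (L x)) :
    Module.finrank K (LinearMap.ker L') = Module.finrank F (LinearMap.ker L) := by
  have hcomm : L' ∘ₗ hf.equiv.toLinearMap =
      hf.equiv.toLinearMap ∘ₗ AlgebraTensorModule.lTensor K K L := by
    ext x
    simp [hf.equiv_tmul, hL]
  calc Module.finrank K (LinearMap.ker L')
      = Module.finrank K (LinearMap.ker (L' ∘ₗ hf.equiv.toLinearMap)) := by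
        rw [LinearMap.ker_comp, Submodule.comap_equiv_eq_map_symm, LinearEquiv.finrank_map_eq]
    _ = Module.finrank K (LinearMap.ker (AlgebraTensorModule.lTensor K K L)) := by
        rw [hcomm, LinearEquiv.ker_comp]
    _ = Module.finrank K (K ⊗[F] LinearMap.ker L) :=
        (LinearMap.tensorKerEquiv K K L).finrank_eq.symm
    _ = Module.finrank F (LinearMap.ker L) := Module.finrank_baseChange

section Sylvester

variable {R : Type*} [CommRing R] {m n : Type*} [Fintype m] [Fintype n]

def Matrix.sylvester (A : Matrix m m R) (B : Matrix n n R) : Matrix m n R →ₗ[R] Matrix m n R where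
  toFun X := A * X - X * B
  map_add' X Y := by rw [Matrix.mul_add, Matrix.add_mul]; abel
  map_smul' c X := by rw [Matrix.mul_smul, Matrix.smul_mul, smul_sub, RingHom.id_apply]

theorem intertwiner_eq_ker_sylvester {F : Type*} [Field F] (A : Matrix m m F) (B : Matrix n n F) :
    intertwiner F A B = LinearMap.ker (A.sylvester B) := by
  ext X
  exact sub_eq_zero.symm

theorem Matrix.sylvester_map {S : Type*} [CommRing S] (f : R →+* S) (A : Matrix m m R)
    (B : Matrix n n R) (X : Matrix m n R) :
    (A.map f).sylvester (B.map f) (X.map f) = (A.sylvester B X).map f := by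
  simp [sylvester, Matrix.map_mul, Matrix.map_sub]

theorem Matrix.isBaseChange_mapMatrix (S : Type*) [CommRing S] [Algebra R S] :
    IsBaseChange S ((Algebra.linearMap R S).mapMatrix : Matrix m n R →ₗ[R] Matrix m n S) :=
  (IsBaseChange.linearMap R S).finitePow n |>.finitePow m

end Sylvester

theorem stmt3 {F K : Type*} [Field F] [Field K] [Algebra F K] {r s : ℕ}
    (A : Matrix (Fin r) (Fin r) F) (B : Matrix (Fin s) (Fin s) F) :
    Module.finrank F (intertwiner F A B)
      = Module.finrank K (intertwiner K (A.map (algebraMap F K)) (B.map (algebraMap F K))) := by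
  rw [intertwiner_eq_ker_sylvester, intertwiner_eq_ker_sylvester]
  exact ((Matrix.isBaseChange_mapMatrix K).finrank_ker_eq _ _
    (Matrix.sylvester_map (algebraMap F K) A B)).symm
end

section
/- Suppose A = A₁ ⊕ A₂ and B = B₁ ⊕ B₂ are block diagonal matrices such that the characteristic polynomials of A₁ and B₂ are coprime and the characteristic polynomials of A₂ and B₁ are coprime. Then dim C(A,B) = dim C(A₁,B₁) + dim C(A₂,B₂). -/
open Matrix

/-!
A solution `X` of `A X = X B` also intertwines `p(A)` and `p(B)` for every polynomial `p`.
If `χ_A` and `χ_B` are coprime, then `χ_A(B)` is invertible while `X χ_A(B) = χ_A(A) X = 0`,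
so `X = 0` (Sylvester). Writing a solution for the block diagonal pair `A₁ ⊕ A₂`, `B₁ ⊕ B₂` in
blocks, the four blocks solve the four equations `Aᵢ Xᵢⱼ = Xᵢⱼ Bⱼ` independently, and the
off-diagonal ones vanish by coprimality.
-/

open Polynomial

namespace Matrix

variable {R : Type*} [CommRing R] {m n : Type*} [Fintype m] [Fintype n]
  [DecidableEq m] [DecidableEq n] {A : Matrix m m R} {B : Matrix n n R} {X : Matrix m n R}

theorem aeval_mul_eq_mul_aeval (h : A * X = X * B) (p : R[X]) :
    aeval A p * X = X * aeval B p := by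
  induction p using Polynomial.induction_on with
  | C a => simp [Algebra.algebraMap_eq_smul_one]
  | add p q hp hq => simp only [map_add, Matrix.add_mul, Matrix.mul_add, hp, hq]
  | monomial k a ih =>
    rw [pow_succ, ← mul_assoc, map_mul, map_mul (aeval B), aeval_X, aeval_X, Matrix.mul_assoc, h,
      ← Matrix.mul_assoc, ih, Matrix.mul_assoc]

theorem eq_zero_of_isCoprime_charpoly (hc : IsCoprime A.charpoly B.charpoly)
    (h : A * X = X * B) : X = 0 := by
  obtain ⟨u, v, huv⟩ := hc
  have hinv : aeval B (u * A.charpoly) = 1 := by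
    simpa [aeval_self_charpoly] using congrArg (aeval B) huv
  calc X = X * aeval B (u * A.charpoly) := by rw [hinv, Matrix.mul_one]
    _ = aeval A (u * A.charpoly) * X := (aeval_mul_eq_mul_aeval h _).symm
    _ = 0 := by simp [aeval_self_charpoly]

end Matrix

section Intertwiner

variable {F : Type*} [Field F] {m₁ m₂ n₁ n₂ : Type*} [Fintype m₁] [Fintype m₂] [Fintype n₁]
  [Fintype n₂] (A₁ : Matrix m₁ m₁ F) (A₂ : Matrix m₂ m₂ F) (B₁ : Matrix n₁ n₁ F)
  (B₂ : Matrix n₂ n₂ F)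

theorem intertwiner_eq_bot_of_isCoprime_charpoly {m n : Type*} [Fintype m] [Fintype n]
    [DecidableEq m] [DecidableEq n] {A : Matrix m m F} {B : Matrix n n F}
    (hc : IsCoprime A.charpoly B.charpoly) : intertwiner F A B = ⊥ :=
  (Submodule.eq_bot_iff _).2 fun _ hX ↦ eq_zero_of_isCoprime_charpoly hc hX

theorem fromBlocks_mem_intertwiner_fromBlocks_iff {X₁₁ : Matrix m₁ n₁ F}
    {X₁₂ : Matrix m₁ n₂ F} {X₂₁ : Matrix m₂ n₁ F} {X₂₂ : Matrix m₂ n₂ F} :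
    fromBlocks X₁₁ X₁₂ X₂₁ X₂₂ ∈ intertwiner F (fromBlocks A₁ 0 0 A₂) (fromBlocks B₁ 0 0 B₂) ↔
      (X₁₁ ∈ intertwiner F A₁ B₁ ∧ X₁₂ ∈ intertwiner F A₁ B₂) ∧
        (X₂₁ ∈ intertwiner F A₂ B₁ ∧ X₂₂ ∈ intertwiner F A₂ B₂) := by
  change _ * _ = _ * _ ↔ (_ * _ = _ * _ ∧ _ * _ = _ * _) ∧ (_ * _ = _ * _ ∧ _ * _ = _ * _)
  simp only [fromBlocks_multiply, Matrix.zero_mul, Matrix.mul_zero, add_zero, zero_add,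
    fromBlocks_inj, and_assoc]

def intertwinerFromBlocksEquiv :
    intertwiner F (fromBlocks A₁ 0 0 A₂) (fromBlocks B₁ 0 0 B₂) ≃ₗ[F]
      (intertwiner F A₁ B₁ × intertwiner F A₁ B₂) ×
        (intertwiner F A₂ B₁ × intertwiner F A₂ B₂) where
  toFun X :=
    have hX := (fromBlocks_mem_intertwiner_fromBlocks_iff A₁ A₂ B₁ B₂).1
      ((fromBlocks_toBlocks X.1).symm ▸ X.2)
    ((⟨_, hX.1.1⟩, ⟨_, hX.1.2⟩), (⟨_, hX.2.1⟩, ⟨_, hX.2.2⟩))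
  invFun P := ⟨fromBlocks P.1.1 P.1.2 P.2.1 P.2.2,
    (fromBlocks_mem_intertwiner_fromBlocks_iff A₁ A₂ B₁ B₂).2
      ⟨⟨P.1.1.2, P.1.2.2⟩, ⟨P.2.1.2, P.2.2.2⟩⟩⟩
  map_add' _ _ := rfl
  map_smul' _ _ := rfl
  left_inv X := Subtype.ext (fromBlocks_toBlocks X.1)
  right_inv _ := rfl

end Intertwiner

theorem stmt5 {F : Type*} [Field F] {r₁ r₂ s₁ s₂ : ℕ}
    (A₁ : Matrix (Fin r₁) (Fin r₁) F) (A₂ : Matrix (Fin r₂) (Fin r₂) F)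
    (B₁ : Matrix (Fin s₁) (Fin s₁) F) (B₂ : Matrix (Fin s₂) (Fin s₂) F)
    (h12 : IsCoprime A₁.charpoly B₂.charpoly) (h21 : IsCoprime A₂.charpoly B₁.charpoly) :
    Module.finrank F (intertwiner F (Matrix.fromBlocks A₁ 0 0 A₂) (Matrix.fromBlocks B₁ 0 0 B₂))
      = Module.finrank F (intertwiner F A₁ B₁) + Module.finrank F (intertwiner F A₂ B₂) := by
  rw [(intertwinerFromBlocksEquiv A₁ A₂ B₁ B₂).finrank_eq, Module.finrank_prod,
    Module.finrank_prod, Module.finrank_prod, intertwiner_eq_bot_of_isCoprime_charpoly h12,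
    intertwiner_eq_bot_of_isCoprime_charpoly h21, finrank_bot, finrank_bot, add_zero, zero_add]
end

section
/- For three partitions λ, μ, ν with conjugates λ', μ', ν', we have Σ_i Σ_j Σ_k min{λ_i, μ_j, ν_k} = Σ_{i≥1} λ'_i μ'_i ν'_i, where the sums on the left range over the nonzero parts of λ, μ, ν respectively. -/
/-- The `i`-th part of the conjugate of a partition given by its multiset of parts:
the number of parts that are `≥ i`. -/
def conjPart (lam : Multiset ℕ) (i : ℕ) : ℕ := (lam.filter (fun p => i ≤ p)).card

/-!
Layer-cake decomposition: `min a (min b c)` counts the levels `i ≥ 1` lying below all three of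
`a`, `b`, `c`, i.e. it is the sum over `i` of the product of the indicators `[i ≤ a] [i ≤ b] [i ≤ c]`.
Exchanging the sum over levels with the sum over triples of parts, the triple sum of this product
factors, and `∑_{a ∈ λ} [i ≤ a] = λ'_i`.
-/

open Finset

theorem Multiset.sum_map_product_mul {α β R : Type*} [NonUnitalNonAssocSemiring R]
    (s : Multiset α) (t : Multiset β) (f : α → R) (g : β → R) :
    ((s ×ˢ t).map fun p => f p.1 * g p.2).sum = (s.map f).sum * (t.map g).sum := by
  simp [SProd.sprod, Multiset.product, map_bind, sum_bind, sum_map_mul_left, sum_map_mul_right]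

theorem conjPart_eq_sum_map (s : Multiset ℕ) (i : ℕ) :
    conjPart s i = (s.map fun a => if i ≤ a then 1 else 0).sum := by
  induction s using Multiset.induction with
  | empty => rfl
  | cons a s ih =>
    rw [conjPart, Multiset.filter_cons] at *
    split_ifs with h <;> simp [ih, h, add_comm]

theorem sum_Icc_one_ite_le {n N : ℕ} (hn : n ≤ N) :
    ∑ i ∈ Icc 1 N, (if i ≤ n then 1 else 0) = n := by
  rw [sum_boole, show {i ∈ Icc 1 N | i ≤ n} = Icc 1 n by ext; simp; omega]
  simp

theorem min_min_eq_sum_Icc_one {a b c N : ℕ} (ha : a ≤ N) :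
    min a (min b c) = ∑ i ∈ Icc 1 N,
      (if i ≤ a then 1 else 0) * ((if i ≤ b then 1 else 0) * (if i ≤ c then 1 else 0)) := by
  simp only [ite_mul, one_mul, zero_mul, ← ite_and, ← le_min_iff]
  exact (sum_Icc_one_ite_le ((min_le_left _ _).trans ha)).symm

theorem stmt10 (lam mu nu : Multiset ℕ) :
    ((lam ×ˢ (mu ×ˢ nu)).map fun p => min p.1 (min p.2.1 p.2.2)).sum
      = ∑ i ∈ Finset.Icc 1 (lam.sum), conjPart lam i * conjPart mu i * conjPart nu i := by
  let ind (i a : ℕ) : ℕ := if i ≤ a then 1 else 0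
  calc ((lam ×ˢ (mu ×ˢ nu)).map fun p => min p.1 (min p.2.1 p.2.2)).sum
      = ((lam ×ˢ (mu ×ˢ nu)).map fun p =>
          ∑ i ∈ Icc 1 lam.sum, ind i p.1 * (ind i p.2.1 * ind i p.2.2)).sum := by
        refine congrArg _ (Multiset.map_congr rfl fun p hp => min_min_eq_sum_Icc_one ?_)
        exact Multiset.le_sum_of_mem (Multiset.mem_product.mp hp).1
    _ = ∑ i ∈ Icc 1 lam.sum,
          ((lam ×ˢ (mu ×ˢ nu)).map fun p => ind i p.1 * (ind i p.2.1 * ind i p.2.2)).sum :=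
        Multiset.sum_map_sum_map _ _
    _ = _ := sum_congr rfl fun i _ => by
        rw [Multiset.sum_map_product_mul lam _ (ind i) fun q : ℕ × ℕ => ind i q.1 * ind i q.2,
          Multiset.sum_map_product_mul, mul_assoc]
        simp only [conjPart_eq_sum_map, ind]
end

section
/- Suppose 1 ≤ k ≤ min{r,s} and |F| ≥ k + 2. Then there exist A ∈ F^{r×r} and B ∈ F^{s×s} such that the subspace C(A,B) = {X : AX = XB} of F^{r×s} has dimension k and minimum Hamming weight (minimum number of nonzero entries of a nonzero element) equal to ⌊r/k⌋·s. -/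
open Matrix

/-- The Hamming weight of a matrix: the number of nonzero entries. -/
def hammingWt {F : Type*} [Field F] [DecidableEq F] {r s : ℕ}
    (X : Matrix (Fin r) (Fin s) F) : ℕ :=
  (Finset.univ.filter fun p : Fin r × Fin s => X p.1 p.2 ≠ 0).card

/-!
Split the rows into `k` blocks `t⁻¹ {u}` with leaders `lead u`, let `A` copy into each row the row
of its leader and let `B` be the matrix of the cyclic shift of the columns. Then `A X = X B` says
that every row of `X`, shifted cyclically, equals the row of its leader. A leader row is thus
invariant under the cyclic shift, hence constant, and then so is every row of its block. So
`C(A, B)` consists of the matrices that are constant on each block: it has dimension `k`, and a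
nonzero element has weight at least `s` times the smallest block size, with equality for the
indicator of a smallest block. Blocks of `⌊r/k⌋` consecutive rows, the last one taking the
remainder, give the theorem.
-/

open Finset Function

theorem Fin.apply_eq_apply_of_apply_finRotate {α : Type*} {s : ℕ} (x : Fin s → α)
    (hx : ∀ j, x (finRotate s j) = x j) (j j' : Fin s) : x j = x j' := by
  cases s with
  | zero => exact j.elim0
  | succ s =>
    have hx0 : ∀ j, x j = x 0 := Fin.induction rfl fun j ih => by
      rw [← Fin.coeSucc_eq_succ, ← finRotate_apply, hx, ih]
    rw [hx0 j, hx0 j']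

theorem mem_intertwiner_submatrix_one_iff {F : Type*} [Field F] {m n : Type*} [Fintype m]
    [Fintype n] [DecidableEq m] [DecidableEq n] (f : m → m) (g : n → n) (X : Matrix m n F) :
    X ∈ intertwiner F ((1 : Matrix m m F).submatrix f id) ((1 : Matrix n n F).submatrix id g) ↔
      ∀ i j, X (f i) j = X i (g j) := by
  show _ * X = X * _ ↔ _
  simp [← Matrix.ext_iff, Matrix.mul_apply, Matrix.one_apply]

def blockConstMatrix (F : Type*) [Field F] {m κ : Type*} (n : Type*) (t : m → κ) :
    (κ → F) →ₗ[F] Matrix m n F where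
  toFun c := Matrix.of fun i _ => c (t i)
  map_add' _ _ := rfl
  map_smul' _ _ := rfl

@[simp]
theorem blockConstMatrix_apply {F : Type*} [Field F] {m κ n : Type*} (t : m → κ) (c : κ → F)
    (i : m) (j : n) : blockConstMatrix F n t c i j = c (t i) :=
  rfl

theorem blockConstMatrix_injective {F : Type*} [Field F] {m κ n : Type*} [Nonempty n]
    {t : m → κ} (ht : Surjective t) : Injective (blockConstMatrix F n t) := by
  intro c d hcd
  funext u
  obtain ⟨i, rfl⟩ := ht u
  exact congr_fun (congr_fun hcd i) (Classical.arbitrary n)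

theorem intertwiner_eq_range_blockConstMatrix {F : Type*} [Field F] {m κ : Type*} [Fintype m]
    [DecidableEq m] {s : ℕ} [NeZero s] (t : m → κ) (lead : κ → m) (hlead : LeftInverse t lead) :
    intertwiner F ((1 : Matrix m m F).submatrix (lead ∘ t) id)
      ((1 : Matrix (Fin s) (Fin s) F).submatrix id (finRotate s)) =
      LinearMap.range (blockConstMatrix F (Fin s) t) := by
  ext X
  rw [mem_intertwiner_submatrix_one_iff, LinearMap.mem_range]
  constructor
  · intro hX
    have hrow (u : κ) : ∀ j j', X (lead u) j = X (lead u) j' :=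
      Fin.apply_eq_apply_of_apply_finRotate _ fun j => by simpa [hlead u] using (hX (lead u) j).symm
    refine ⟨fun u => X (lead u) 0, Matrix.ext fun i j => ?_⟩
    obtain ⟨j, rfl⟩ := (finRotate s).surjective j
    rw [blockConstMatrix_apply, ← hX i j]
    exact hrow _ _ _
  · rintro ⟨c, rfl⟩ i j
    simp [hlead (t i)]

section

variable {F : Type*} [Field F] [DecidableEq F] {r s : ℕ} {κ : Type*}

theorem hammingWt_blockConstMatrix (t : Fin r → κ) (c : κ → F) :
    hammingWt (blockConstMatrix F (Fin s) t c) = #{i | c (t i) ≠ 0} * s := by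
  change #{p : Fin r × Fin s | c (t p.1) ≠ 0} = _
  rw [← univ_product_univ, filter_product_left (fun i => c (t i) ≠ 0), card_product,
    card_univ, Fintype.card_fin]

theorem isLeast_hammingWt_range_blockConstMatrix [Fintype κ] [DecidableEq κ] (t : Fin r → κ)
    {q : ℕ} (hq : 0 < q) (hs : 0 < s) (hfiber : ∀ u, q ≤ #{i | t i = u}) (u₀ : κ)
    (hu₀ : #{i | t i = u₀} = q) :
    IsLeast {w | ∃ X ∈ LinearMap.range (blockConstMatrix F (Fin s) t), X ≠ 0 ∧ hammingWt X = w}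
      (q * s) := by
  constructor
  · have hwt : hammingWt (blockConstMatrix F (Fin s) t (Pi.single u₀ 1)) = q * s := by
      rw [hammingWt_blockConstMatrix, ← hu₀]
      congr 2
      ext i
      by_cases h : t i = u₀ <;> simp [h]
    refine ⟨_, LinearMap.mem_range_self _ _, fun h0 => ?_, hwt⟩
    rw [h0] at hwt
    simp [hammingWt] at hwt
    omega
  · rintro w ⟨_, ⟨c, rfl⟩, hX, rfl⟩
    obtain ⟨u, hu⟩ : ∃ u, c u ≠ 0 := by
      by_contra! h
      exact hX (by rw [show c = 0 from funext h, map_zero])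
    rw [hammingWt_blockConstMatrix]
    gcongr
    calc q ≤ #{i | t i = u} := hfiber u
      _ ≤ #{i | c (t i) ≠ 0} := card_le_card fun i => by simp_all

end

def blockIndex (q : ℕ) {r k : ℕ} [NeZero k] (i : Fin r) : Fin k :=
  ⟨min (i / q) (k - 1), by have := NeZero.pos k; omega⟩

section

variable {r k : ℕ} [NeZero k]

theorem le_card_blockIndex_eq (u : Fin k) : r / k ≤ #{i : Fin r | blockIndex (r / k) i = u} := by
  set q := r / k
  rcases Nat.eq_zero_or_pos q with hq | hq
  · simp [hq]
  have hlt (n : Fin q) : q * u + n < r := by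
    have hqk : q * (u + 1) ≤ q * k := Nat.mul_le_mul_left q u.isLt
    have hkr : q * k ≤ r := mul_comm q k ▸ Nat.div_mul_le_self r k
    linarith [n.isLt]
  calc q = #(univ : Finset (Fin q)) := by simp
    _ ≤ _ := card_le_card_of_injOn (fun n => ⟨q * u + n, hlt n⟩)
        (fun n _ => by
          simp only [coe_filter, Set.mem_ofPred_eq, mem_univ, true_and, blockIndex, Fin.ext_iff]
          rw [Nat.mul_add_div hq, Nat.div_eq_of_lt n.isLt]
          omega)
        (fun n _ n' _ h => by simpa [Fin.ext_iff] using h)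

theorem card_blockIndex_eq_zero (hkr : k ≤ r) :
    #{i : Fin r | blockIndex (r / k) i = (0 : Fin k)} = r / k := by
  have hq : 0 < r / k := Nat.div_pos hkr (NeZero.pos k)
  have hfiber (i : Fin r) : blockIndex (r / k) i = (0 : Fin k) ↔ (i : ℕ) < r / k := by
    simp only [blockIndex, Fin.ext_iff, Fin.val_zero]
    constructor
    · intro h
      by_contra! hi
      have : 1 ≤ i / (r / k) := (Nat.one_le_div_iff hq).mpr hi
      have hk1 : k = 1 := by have := NeZero.pos k; omega
      subst hk1
      simp at hi
      omega
    · intro h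
      simp [Nat.div_eq_of_lt h]
  rw [filter_congr fun i _ => hfiber i, Fin.card_filter_val_lt]
  exact min_eq_right (Nat.div_le_self r k)

end

theorem exists_intertwiner_of_card_fiber {F : Type*} [Field F] [DecidableEq F] {r s : ℕ}
    {κ : Type*} [Fintype κ] [DecidableEq κ] (t : Fin r → κ) {q : ℕ} (hq : 0 < q) (hs : 0 < s)
    (hfiber : ∀ u, q ≤ #{i | t i = u}) (u₀ : κ) (hu₀ : #{i | t i = u₀} = q) :
    ∃ (A : Matrix (Fin r) (Fin r) F) (B : Matrix (Fin s) (Fin s) F),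
      Module.finrank F (intertwiner F A B) = Fintype.card κ ∧
      IsLeast {w | ∃ X ∈ intertwiner F A B, X ≠ 0 ∧ hammingWt X = w} (q * s) := by
  have ht : Surjective t := fun u => by
    obtain ⟨i, hi⟩ := card_pos.mp (hq.trans_le (hfiber u))
    exact ⟨i, (mem_filter.mp hi).2⟩
  have : NeZero s := ⟨hs.ne'⟩
  refine ⟨(1 : Matrix _ _ F).submatrix (surjInv ht ∘ t) id,
    (1 : Matrix _ _ F).submatrix id (finRotate s), ?_⟩
  rw [intertwiner_eq_range_blockConstMatrix t _ (rightInverse_surjInv ht),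
    LinearMap.finrank_range_of_inj (blockConstMatrix_injective ht),
    Module.finrank_fintype_fun_eq_card]
  exact ⟨rfl, isLeast_hammingWt_range_blockConstMatrix t hq hs hfiber u₀ hu₀⟩

theorem stmt15_general {F : Type*} [Field F] [DecidableEq F] {r s k : ℕ}
    (hk : 0 < k) (hkr : k ≤ r) (hks : k ≤ s) :
    ∃ (A : Matrix (Fin r) (Fin r) F) (B : Matrix (Fin s) (Fin s) F),
      Module.finrank F (intertwiner F A B) = k ∧
      IsLeast {w | ∃ X ∈ intertwiner F A B, X ≠ 0 ∧ hammingWt X = w} (r / k * s) := by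
  have : NeZero k := ⟨hk.ne'⟩
  simpa using exists_intertwiner_of_card_fiber (F := F) (s := s) (blockIndex (r / k))
    (Nat.div_pos hkr hk) (hk.trans_le hks) le_card_blockIndex_eq 0 (card_blockIndex_eq_zero hkr)

theorem stmt15 {F : Type*} [Field F] [DecidableEq F] {r s k : ℕ}
    (hk : 0 < k) (hkr : k ≤ r) (hks : k ≤ s)
    (hF : (k + 2 : Cardinal) ≤ Cardinal.mk F) :
    ∃ (A : Matrix (Fin r) (Fin r) F) (B : Matrix (Fin s) (Fin s) F),
      Module.finrank F (intertwiner F A B) = k ∧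
      IsLeast {w | ∃ X ∈ intertwiner F A B, X ≠ 0 ∧ hammingWt X = w} (r / k * s) :=
  stmt15_general hk hkr hks
end

section
/- If |F| ≥ min{r,s} + 2, then there exist matrices A ∈ F^{r×r} and B ∈ F^{s×s} such that C(A,B) = {X : AX = XB} has dimension min{r,s} and minimum Hamming weight max{r,s}. -/
open Matrix

/-!
Take `A = 1` and `B` the permutation matrix of the cyclic shift. Then `A X = X B` says that every
row of `X` is invariant under the cyclic shift, i.e. constant, so `C(A, B)` is the space of
matrices with constant rows: it has dimension `r`, and a nonzero codeword contains a whole nonzero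
row, so it has weight at least `s`, attained by a single row of ones. This handles `r ≤ s`;
transposition, which maps `C(A, B)` onto `C(Bᵀ, Aᵀ)` and preserves weights, handles `s ≤ r`.
-/

namespace Fin

theorem apply_eq_apply_of_apply_finRotate_s16 {α : Type*} {n : ℕ} {f : Fin n → α}
    (hf : ∀ i, f (finRotate n i) = f i) (i j : Fin n) : f i = f j := by
  cases n with
  | zero => exact i.elim0
  | succ n =>
    have h0 : ∀ k : Fin (n + 1), f k = f 0 :=
      Fin.induction rfl fun k hk => by rw [← coeSucc_eq_succ, ← finRotate_apply, hf, hk]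
    rw [h0 i, h0 j]

end Fin

namespace Matrix

variable (R ι : Type*) {m : Type*} [Semiring R]

@[simps]
def replicateColLinearMap : (m → R) →ₗ[R] Matrix m ι R where
  toFun := replicateCol ι
  map_add' := replicateCol_add
  map_smul' := replicateCol_smul

end Matrix

section

open Finset

variable {F : Type*} [Field F]

theorem mem_intertwiner_iff {m n : Type*} [Fintype m] [Fintype n]
    {A : Matrix m m F} {B : Matrix n n F} {X : Matrix m n F} :
    X ∈ intertwiner F A B ↔ A * X = X * B :=
  Iff.rfl

theorem transpose_mem_intertwiner_iff {m n : Type*} [Fintype m] [Fintype n]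
    {A : Matrix m m F} {B : Matrix n n F} {X : Matrix m n F} :
    Xᵀ ∈ intertwiner F Bᵀ Aᵀ ↔ X ∈ intertwiner F A B := by
  rw [mem_intertwiner_iff, mem_intertwiner_iff, ← transpose_mul, ← transpose_mul, transpose_inj,
    eq_comm]

theorem finrank_intertwiner_transpose {m n : Type*} [Fintype m] [Fintype n]
    (A : Matrix m m F) (B : Matrix n n F) :
    Module.finrank F (intertwiner F Bᵀ Aᵀ) = Module.finrank F (intertwiner F A B) := by
  have hmap : (intertwiner F A B).map (transposeLinearEquiv m n F F).toLinearMap =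
      intertwiner F Bᵀ Aᵀ := by
    ext Y
    rw [Submodule.mem_map_equiv, ← transpose_mem_intertwiner_iff]
    rfl
  rw [← hmap, LinearEquiv.finrank_map_eq]

theorem intertwiner_one_finRotate_eq_range_replicateCol (r s : ℕ) :
    intertwiner F 1 (Equiv.Perm.permMatrix F (finRotate s).symm) =
      LinearMap.range (replicateColLinearMap F (Fin s) (m := Fin r)) := by
  ext X
  rw [mem_intertwiner_iff, Matrix.one_mul, Equiv.Perm.permMatrix, PEquiv.mul_toMatrix_toPEquiv,
    Equiv.symm_symm]
  constructor
  · intro h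
    have hrow : ∀ i j j', X i j = X i j' := fun i =>
      Fin.apply_eq_apply_of_apply_finRotate_s16 fun j => (congrFun (congrFun h i) j).symm
    cases s with
    | zero => exact ⟨0, ext fun _ j => j.elim0⟩
    | succ s => exact ⟨fun i => X i 0, ext fun i j => hrow i 0 j⟩
  · rintro ⟨v, rfl⟩
    rfl

theorem finrank_intertwiner_one_finRotate {r s : ℕ} (hs : 0 < s) :
    Module.finrank F (intertwiner F (1 : Matrix (Fin r) (Fin r) F)
      (Equiv.Perm.permMatrix F (finRotate s).symm)) = r := by
  have : Nonempty (Fin s) := Fin.pos_iff_nonempty.mp hs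
  rw [intertwiner_one_finRotate_eq_range_replicateCol,
    LinearMap.finrank_range_of_inj replicateCol_injective, Module.finrank_fin_fun]

section Weights

variable [DecidableEq F] {r s : ℕ}

def codeWeights (C : Submodule F (Matrix (Fin r) (Fin s) F)) : Set ℕ :=
  {w | ∃ X ∈ C, X ≠ 0 ∧ hammingWt X = w}

theorem hammingWt_transpose (X : Matrix (Fin r) (Fin s) F) : hammingWt Xᵀ = hammingWt X :=
  card_equiv (Equiv.prodComm _ _) fun _ => by
    rw [mem_filter_univ, mem_filter_univ]
    rfl

theorem codeWeights_intertwiner_transpose (A : Matrix (Fin r) (Fin r) F)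
    (B : Matrix (Fin s) (Fin s) F) :
    codeWeights (intertwiner F Bᵀ Aᵀ) = codeWeights (intertwiner F A B) := by
  ext w
  constructor
  · rintro ⟨X, hX, hX0, rfl⟩
    refine ⟨Xᵀ, ?_, by simpa using hX0, hammingWt_transpose X⟩
    rwa [← transpose_mem_intertwiner_iff, transpose_transpose]
  · rintro ⟨X, hX, hX0, rfl⟩
    exact ⟨Xᵀ, transpose_mem_intertwiner_iff.mpr hX, by simpa using hX0, hammingWt_transpose X⟩

theorem hammingWt_replicateCol (v : Fin r → F) :
    hammingWt (replicateCol (Fin s) v) = #{i | v i ≠ 0} * s :=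
  calc hammingWt (replicateCol (Fin s) v)
      = #(({i | v i ≠ 0} : Finset (Fin r)) ×ˢ (univ : Finset (Fin s))) :=
        congrArg card (ext fun p => by rw [mem_filter_univ]; simp [replicateCol_apply])
    _ = #{i | v i ≠ 0} * s := by rw [card_product, card_fin]

theorem isLeast_codeWeights_intertwiner_one_finRotate (hr : 0 < r) (hs : 0 < s) :
    IsLeast (codeWeights (intertwiner F (1 : Matrix (Fin r) (Fin r) F)
      (Equiv.Perm.permMatrix F (finRotate s).symm))) s := by
  have : Nonempty (Fin s) := Fin.pos_iff_nonempty.mp hs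
  rw [intertwiner_one_finRotate_eq_range_replicateCol]
  constructor
  · refine ⟨replicateCol (Fin s) (Pi.single ⟨0, hr⟩ 1), ⟨_, rfl⟩, by simp, ?_⟩
    simp [hammingWt_replicateCol, Pi.single_apply, filter_eq']
  · rintro w ⟨_, ⟨v, rfl⟩, hv, rfl⟩
    obtain ⟨i, hi⟩ := Function.ne_iff.mp (show v ≠ 0 by simpa using hv)
    rw [replicateColLinearMap_apply, hammingWt_replicateCol]
    exact Nat.le_mul_of_pos_left s (card_pos.mpr ⟨i, by simpa using hi⟩)

end Weights

end

theorem stmt16_general {F : Type*} [Field F] [DecidableEq F] {r s : ℕ}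
    (hr : 0 < r) (hs : 0 < s) :
    ∃ (A : Matrix (Fin r) (Fin r) F) (B : Matrix (Fin s) (Fin s) F),
      Module.finrank F (intertwiner F A B) = min r s ∧
      IsLeast {w | ∃ X ∈ intertwiner F A B, X ≠ 0 ∧ hammingWt X = w} (max r s) := by
  rcases le_total r s with h | h
  · rw [min_eq_left h, max_eq_right h]
    exact ⟨1, _, finrank_intertwiner_one_finRotate hs,
      isLeast_codeWeights_intertwiner_one_finRotate hr hs⟩
  · rw [min_eq_right h, max_eq_left h]
    refine ⟨_, _, (finrank_intertwiner_transpose _ _).trans (finrank_intertwiner_one_finRotate hr),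
      ?_⟩
    change IsLeast (codeWeights _) r
    rw [codeWeights_intertwiner_transpose]
    exact isLeast_codeWeights_intertwiner_one_finRotate hs hr

theorem stmt16 {F : Type*} [Field F] [DecidableEq F] {r s : ℕ}
    (hr : 0 < r) (hs : 0 < s)
    (hF : (min r s + 2 : Cardinal) ≤ Cardinal.mk F) :
    ∃ (A : Matrix (Fin r) (Fin r) F) (B : Matrix (Fin s) (Fin s) F),
      Module.finrank F (intertwiner F A B) = min r s ∧
      IsLeast {w | ∃ X ∈ intertwiner F A B, X ≠ 0 ∧ hammingWt X = w} (max r s) :=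
  stmt16_general hr hs
end
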